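/- Let Θ : H → ℝ be (p+1) times continuously Fréchet differentiable with uniformly bounded (p+1)-st derivative, and let m be distributed as N(m̄, εC) for ε > 0, with C positive self-adjoint trace-class. Then the expected value of the absolute truncation error of the p-th order Taylor expansion of Θ about m̄ is O(ε^{(p+1)/2}) as ε → 0. -/

import Mathlib

open MeasureTheory RealInnerProductSpace

/-- `μ` is the Gaussian measure on the Hilbert space `H` with mean `a` and covariance
operator `C`, characterized by one-dimensional projections. -/
def IsGaussianH {H : Type*} [NormedAddCommGroup H] [InnerProductSpace ℝ H]
    [MeasurableSpace H] (μ : Measure H) (a : H) (C : H →L[ℝ] H) : Prop :=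
  IsProbabilityMeasure μ ∧
  ∀ b : H, μ.map (fun s => ⟪s, b⟫) =
    ProbabilityTheory.gaussianReal ⟪a, b⟫ (Real.toNNReal ⟪C b, b⟫)

open Set ProbabilityTheory ENNReal
open scoped NNReal Nat

/-!
Along the segment from `m̄` to `m`, Taylor's theorem with Lagrange remainder bounds the truncation
error by `K / (p+1)! * ‖m - m̄‖ ^ (p+1)`, so it suffices to bound the `(p+1)`-st moment of
`‖m - m̄‖`. By Parseval, `‖m - m̄‖² = ∑ᵢ ⟪m - m̄, eᵢ⟫²`, and the `i`-th coordinate is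
`N(0, ε ⟪C eᵢ, eᵢ⟫)`. Minkowski's inequality in `L^((p+1)/2)` then gives
`E ‖m - m̄‖ ^ (p+1) ≤ (ε tr C) ^ ((p+1)/2) * E |Z| ^ (p+1)` for a standard normal `Z`.
-/

section Taylor

variable {E F : Type*} [NormedAddCommGroup E] [NormedSpace ℝ E]
  [NormedAddCommGroup F] [NormedSpace ℝ F]

theorem iteratedDeriv_comp_add_smul {N : ℕ} {f : E → F} (hf : ContDiff ℝ N f) {n : ℕ}
    (hn : n ≤ N) (a v : E) (t : ℝ) :
    iteratedDeriv n (fun s : ℝ => f (a + s • v)) t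
      = iteratedFDeriv ℝ n f (a + t • v) (fun _ => v) := by
  have hshift : ContDiff ℝ N (fun y => f (a + y)) := hf.comp (contDiff_const.add contDiff_id)
  have hline : (fun s : ℝ => f (a + s • v))
      = (fun y => f (a + y)) ∘ ContinuousLinearMap.smulRight (ContinuousLinearMap.id ℝ ℝ) v :=
    rfl
  rw [iteratedDeriv_eq_iteratedFDeriv, hline,
    ContinuousLinearMap.iteratedFDeriv_comp_right _ hshift t (mod_cast hn),
    ContinuousMultilinearMap.compContinuousLinearMap_apply, iteratedFDeriv_comp_add_left]
  simp

theorem abs_sub_taylor_le {n : ℕ} {f : E → ℝ} (hf : ContDiff ℝ (n + 1 : ℕ) f) {K : ℝ}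
    (hK : ∀ (ξ : E) (v : Fin (n + 1) → E), |iteratedFDeriv ℝ (n + 1) f ξ v| ≤ K * ∏ i, ‖v i‖)
    (a x : E) :
    |f x - (f a + ∑ k ∈ Finset.Icc 1 n,
        (1 / (k ! : ℝ)) * iteratedFDeriv ℝ k f a (fun _ => x - a))|
      ≤ K / (n + 1)! * ‖x - a‖ ^ (n + 1) := by
  set g : ℝ → ℝ := fun t => f (a + t • (x - a))
  have hg : ContDiff ℝ (n + 1 : ℕ) g :=
    hf.comp (contDiff_const.add (contDiff_id.smul contDiff_const))
  have hderiv : ∀ {k : ℕ}, k ≤ n + 1 → ∀ t, iteratedDeriv k g t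
      = iteratedFDeriv ℝ k f (a + t • (x - a)) (fun _ => x - a) :=
    fun hk t => iteratedDeriv_comp_add_smul hf hk a (x - a) t
  obtain ⟨ξ, -, hξ⟩ := taylor_mean_remainder_lagrange_iteratedDeriv (f := g) (x₀ := 0) (x := 1)
    zero_ne_one (mod_cast hg.contDiffOn)
  have htaylor : taylorWithinEval g n (uIcc 0 1) 0 1 = f a + ∑ k ∈ Finset.Icc 1 n,
      (1 / (k ! : ℝ)) * iteratedFDeriv ℝ k f a (fun _ => x - a) := by
    have hwithin : ∀ k ≤ n, iteratedDerivWithin k g (uIcc 0 1) 0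
        = iteratedFDeriv ℝ k f a (fun _ => x - a) := fun k hk => by
      rw [iteratedDerivWithin_eq_iteratedDeriv (uniqueDiffOn_uIcc zero_ne_one)
        (hg.contDiffAt.of_le (mod_cast hk.trans n.le_succ)) left_mem_uIcc,
        hderiv (hk.trans n.le_succ), zero_smul, add_zero]
    rw [taylor_within_apply, Finset.range_eq_Ico, Finset.sum_eq_sum_Ico_succ_bot n.succ_pos,
      zero_add, Nat.succ_eq_add_one, Finset.Ico_add_one_right_eq_Icc]
    refine congrArg₂ _ (by simp [g]) (Finset.sum_congr rfl fun k hk => ?_)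
    rw [hwithin k (Finset.mem_Icc.1 hk).2]
    simp
  have hbound := hK (a + ξ • (x - a)) (fun _ => x - a)
  rw [Finset.prod_const, Finset.card_fin] at hbound
  rw [← htaylor, show f x = g 1 by simp [g], hξ, hderiv le_rfl, abs_div, Nat.abs_cast,
    div_mul_eq_mul_div]
  simpa using div_le_div_of_nonneg_right hbound (Nat.cast_nonneg _)

end Taylor

theorem lintegral_enorm_rpow_gaussianReal_ne_top (m : ℝ) (v : ℝ≥0) {r : ℝ} (hr : 0 < r) :
    ∫⁻ x, ‖x‖ₑ ^ r ∂gaussianReal m v ≠ ∞ := by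
  have h := lintegral_rpow_enorm_lt_top_of_eLpNorm_lt_top (by simpa using hr) coe_ne_top
    (memLp_id_gaussianReal (μ := m) (v := v) r.toNNReal).eLpNorm_lt_top
  simpa [hr.le] using h.ne

theorem Orthonormal.countable {H : Type*} [NormedAddCommGroup H] [InnerProductSpace ℝ H]
    [TopologicalSpace.SeparableSpace H] {ι : Type*} {v : ι → H} (hv : Orthonormal ℝ v) :
    Countable ι := by
  have hdist : ∀ i j, i ≠ j → 1 ≤ dist (v i) (v j) := by
    intro i j hij
    have hsq : dist (v i) (v j) ^ 2 = 2 := by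
      rw [dist_eq_norm, norm_sub_sq_real, hv.1 i, hv.1 j, hv.2 hij]
      norm_num
    nlinarith [dist_nonneg (x := v i) (y := v j)]
  refine Pairwise.countable_of_isOpen_disjoint (s := fun i => Metric.ball (v i) (1 / 2))
    (fun i j hij => Metric.ball_disjoint_ball (by linarith [hdist i j hij]))
    (fun _ => Metric.isOpen_ball) (fun i => Metric.nonempty_ball.2 (by norm_num))

theorem ENNReal.iSup_rpow {β : Type*} (x : β → ℝ≥0∞) {r : ℝ} (hr : 0 < r) :
    (⨆ b, x b) ^ r = ⨆ b, x b ^ r :=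
  (orderIsoRpow r hr).map_iSup x

theorem eLpNorm'_tsum_le {α ι : Type*} [MeasurableSpace α] {μ : Measure α} [Countable ι]
    {f : ι → α → ℝ≥0∞} (hf : ∀ i, AEMeasurable (f i) μ) {q : ℝ} (hq : 1 ≤ q) :
    eLpNorm' (fun a => ∑' i, f i a) q μ ≤ ∑' i, eLpNorm' (f i) q μ := by
  have hq0 : 0 < q := zero_lt_one.trans_le hq
  have hsup : eLpNorm' (fun a => ∑' i, f i a) q μ
      = ⨆ s : Finset ι, eLpNorm' (∑ i ∈ s, f i) q μ := by
    simp only [eLpNorm', enorm_eq_self, ENNReal.tsum_eq_iSup_sum, Finset.sum_apply]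
    rw [← ENNReal.iSup_rpow _ (by positivity)]
    simp only [ENNReal.iSup_rpow _ hq0]
    rw [lintegral_iSup_directed]
    · exact fun s => (Finset.aemeasurable_fun_sum s fun i _ => hf i).pow_const q
    · classical
      exact fun s t => ⟨s ∪ t,
        fun a => rpow_le_rpow (Finset.sum_le_sum_of_subset Finset.subset_union_left) hq0.le,
        fun a => rpow_le_rpow (Finset.sum_le_sum_of_subset Finset.subset_union_right) hq0.le⟩
  rw [hsup]
  exact iSup_le fun s => (eLpNorm'_sum_le (fun i _ => (hf i).aestronglyMeasurable) hq).trans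
    (ENNReal.sum_le_tsum s)

theorem HilbertBasis.enorm_sq_eq_tsum {H : Type*} [NormedAddCommGroup H] [InnerProductSpace ℝ H]
    {ι : Type*} (e : HilbertBasis ι ℝ H) (x : H) :
    ‖x‖ₑ ^ 2 = ∑' i, ‖⟪x, e i⟫‖ₑ ^ 2 := by
  have hsum : HasSum (fun i => ⟪x, e i⟫ ^ 2) (‖x‖ ^ 2) := by
    simpa [← real_inner_self_eq_norm_sq, sq, real_inner_comm x] using e.hasSum_inner_mul_inner x x
  have hterm : ∀ i, ‖⟪x, e i⟫‖ₑ ^ 2 = ENNReal.ofReal (⟪x, e i⟫ ^ 2) := fun i => by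
    rw [Real.enorm_eq_ofReal_abs, ← ofReal_pow (abs_nonneg _), sq_abs]
  rw [tsum_congr hterm, ← ENNReal.ofReal_tsum_of_nonneg (fun i => sq_nonneg _) hsum.summable,
    hsum.tsum_eq, ofReal_pow (norm_nonneg _), ofReal_norm]

theorem lintegral_enorm_sub_rpow_gaussianReal (a : ℝ) (w : ℝ≥0) {r : ℝ} (hr : 0 ≤ r) :
    ∫⁻ x, ‖x - a‖ₑ ^ r ∂gaussianReal a w
      = (w : ℝ≥0∞) ^ (r / 2) * ∫⁻ x, ‖x‖ₑ ^ r ∂gaussianReal 0 1 := by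
  have hscale : gaussianReal a w = ((gaussianReal 0 1).map (√w * ·)).map (· + a) := by
    rw [gaussianReal_map_const_mul, gaussianReal_map_add_const]
    congr 1
    · simp
    · ext; simp
  rw [hscale, lintegral_map (by fun_prop) (by fun_prop), lintegral_map (by fun_prop) (by fun_prop),
    ← lintegral_const_mul' _ _ (rpow_ne_top_of_nonneg (by positivity) coe_ne_top)]
  refine lintegral_congr fun x => ?_
  rw [add_sub_cancel_right, enorm_mul, ENNReal.mul_rpow_of_nonneg _ _ hr,
    Real.enorm_eq_ofReal (Real.sqrt_nonneg _), ← Real.coe_sqrt, ENNReal.ofReal_coe_nnreal,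
    NNReal.sqrt_eq_rpow, ENNReal.coe_rpow_of_nonneg w (by norm_num : (0 : ℝ) ≤ 1 / 2),
    ← ENNReal.rpow_mul]
  ring_nf

theorem lintegral_enorm_sub_rpow_le_of_isGaussianH {H : Type*} [NormedAddCommGroup H]
    [InnerProductSpace ℝ H] [MeasurableSpace H] [BorelSpace H] {μ : Measure H} {a : H}
    {C : H →L[ℝ] H} (hμ : IsGaussianH μ a C) {ι : Type*} [Countable ι] (e : HilbertBasis ι ℝ H)
    {r : ℝ} (hr : 2 ≤ r) :
    ∫⁻ m, ‖m - a‖ₑ ^ r ∂μ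
      ≤ (∑' i, ENNReal.ofReal ⟪C (e i), e i⟫) ^ (r / 2) * ∫⁻ x, ‖x‖ₑ ^ r ∂gaussianReal 0 1 := by
  set M := ∫⁻ x, ‖x‖ₑ ^ r ∂gaussianReal 0 1
  have hq : 1 ≤ r / 2 := by linarith
  have hq0 : 0 < r / 2 := by linarith
  have hsq_rpow : ∀ x : ℝ≥0∞, (x ^ 2) ^ (r / 2) = x ^ r := fun x => by
    rw [← rpow_natCast, ← rpow_mul]; ring_nf
  have hcoord : ∀ i, (∫⁻ m, ‖⟪m - a, e i⟫‖ₑ ^ r ∂μ) ^ (1 / (r / 2))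
      = ENNReal.ofReal ⟪C (e i), e i⟫ * M ^ (1 / (r / 2)) := by
    intro i
    simp only [inner_sub_left]
    rw [← lintegral_map (f := fun x => ‖x - ⟪a, e i⟫‖ₑ ^ r) (by fun_prop) (by fun_prop),
      hμ.2 (e i), lintegral_enorm_sub_rpow_gaussianReal _ _ (by linarith),
      ENNReal.mul_rpow_of_nonneg _ _ (by positivity), ← rpow_mul, mul_one_div_cancel hq0.ne',
      rpow_one]
    rfl
  have hminkowski := eLpNorm'_tsum_le (μ := μ) (f := fun i m => ‖⟪m - a, e i⟫‖ₑ ^ 2)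
    (fun i => by fun_prop) hq
  simp only [eLpNorm', enorm_eq_self, ← e.enorm_sq_eq_tsum, hsq_rpow, hcoord,
    ENNReal.tsum_mul_right] at hminkowski
  rwa [one_div, ENNReal.rpow_inv_le_iff hq0, ENNReal.mul_rpow_of_nonneg _ _ hq0.le, ← rpow_mul,
    inv_mul_cancel₀ hq0.ne', rpow_one] at hminkowski

theorem integral_le_of_lintegral_enorm_le {α : Type*} [MeasurableSpace α] {μ : Measure α}
    {f : α → ℝ} {B : ℝ} (hB : 0 ≤ B) (h : ∫⁻ a, ‖f a‖ₑ ∂μ ≤ ENNReal.ofReal B) :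
    ∫ a, f a ∂μ ≤ B := by
  have hnorm : ‖∫ a, f a ∂μ‖ₑ ≤ ENNReal.ofReal B := (enorm_integral_le_lintegral_enorm f).trans h
  rw [← ofReal_norm, ofReal_le_ofReal_iff hB] at hnorm
  exact (le_abs_self _).trans hnorm

theorem exists_lintegral_enorm_sub_pow_le_of_isGaussianH_smul {H : Type*}
    [NormedAddCommGroup H] [InnerProductSpace ℝ H] [TopologicalSpace.SeparableSpace H]
    [MeasurableSpace H] [BorelSpace H] {C : H →L[ℝ] H} (hCpos : ∀ x : H, 0 ≤ ⟪C x, x⟫)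
    {ι : Type*} (e : HilbertBasis ι ℝ H) (htr : Summable fun i => ⟪C (e i), e i⟫) (a : H)
    {n : ℕ} (hn : 2 ≤ n) :
    ∃ B : ℝ, 0 ≤ B ∧ ∀ ε : ℝ, 0 < ε → ∀ μ : Measure H, IsGaussianH μ a (ε • C) →
      ∫⁻ m, ‖m - a‖ₑ ^ n ∂μ ≤ ENNReal.ofReal (B * ε ^ ((n : ℝ) / 2)) := by
  have : Countable ι := e.orthonormal.countable
  set S := ∑' i, ⟪C (e i), e i⟫
  set Mg := ∫⁻ x, ‖x‖ₑ ^ n ∂gaussianReal 0 1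
  have hS : 0 ≤ S := tsum_nonneg fun i => hCpos (e i)
  have hMg : Mg ≠ ∞ := by
    simpa using lintegral_enorm_rpow_gaussianReal_ne_top 0 1 (r := n) (by positivity)
  refine ⟨S ^ ((n : ℝ) / 2) * Mg.toReal, by positivity, fun ε hε μ hμ => ?_⟩
  have htrace : ∑' i, ENNReal.ofReal ⟪(ε • C) (e i), e i⟫ = ENNReal.ofReal (ε * S) := by
    simp only [FunLike.coe_smul, Pi.smul_apply, real_inner_smul_left]
    rw [← ENNReal.ofReal_tsum_of_nonneg (fun i => mul_nonneg hε.le (hCpos _)) (htr.mul_left ε),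
      tsum_mul_left]
  have h := lintegral_enorm_sub_rpow_le_of_isGaussianH hμ e (r := n) (mod_cast hn)
  rw [htrace] at h
  simp only [rpow_natCast] at h
  refine h.trans_eq ?_
  rw [ofReal_rpow_of_nonneg (mul_nonneg hε.le hS) (by positivity), Real.mul_rpow hε.le hS,
    ofReal_mul (by positivity), ofReal_mul (by positivity), ofReal_mul (by positivity),
    ofReal_toReal hMg]
  ring

theorem expected_taylor_remainder_higher_order_general
    {H : Type*} [NormedAddCommGroup H] [InnerProductSpace ℝ H]
    [TopologicalSpace.SeparableSpace H] [MeasurableSpace H] [BorelSpace H]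
    (p : ℕ) (hp : 1 ≤ p)
    (Θ : H → ℝ) (hΘ : ContDiff ℝ (↑(p + 1)) Θ)
    (K : ℝ)
    (hK : ∀ (ξ : H) (v : Fin (p + 1) → H),
      |iteratedFDeriv ℝ (p + 1) Θ ξ v| ≤ K * ∏ i, ‖v i‖)
    (mbar : H) (C : H →L[ℝ] H)
    (hCpos : ∀ x : H, 0 ≤ ⟪C x, x⟫)
    {ι : Type*} (e : HilbertBasis ι ℝ H)
    (htr : Summable fun i => ⟪C (e i), e i⟫) :
    ∃ M : ℝ, ∀ ε : ℝ, 0 < ε → ∀ μ : Measure H, IsGaussianH μ mbar (ε • C) →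
      ∫ m, |Θ m - (Θ mbar + ∑ n ∈ Finset.Icc 1 p,
          (1 / (n.factorial : ℝ)) * iteratedFDeriv ℝ n Θ mbar (fun _ => m - mbar))| ∂μ ≤
        M * ε ^ (((p : ℝ) + 1) / 2) := by
  obtain ⟨B, hB, hmoment⟩ := exists_lintegral_enorm_sub_pow_le_of_isGaussianH_smul hCpos e htr
    mbar (n := p + 1) (by omega)
  -- `hK` forces `0 ≤ K` only when `H` is nontrivial.
  have hK' : ∀ (ξ : H) (v : Fin (p + 1) → H),
      |iteratedFDeriv ℝ (p + 1) Θ ξ v| ≤ max K 0 * ∏ i, ‖v i‖ := fun ξ v =>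
    (hK ξ v).trans (by gcongr; exact le_max_left _ _)
  set c : ℝ := max K 0 / (p + 1)!
  refine ⟨c * B, fun ε hε μ hμ => integral_le_of_lintegral_enorm_le (by positivity) ?_⟩
  calc _ ≤ ∫⁻ m, ENNReal.ofReal c * ‖m - mbar‖ₑ ^ (p + 1) ∂μ := by
        refine lintegral_mono fun m => ?_
        rw [Real.enorm_abs, Real.enorm_eq_ofReal_abs, ← ofReal_norm, ← ofReal_pow (norm_nonneg _),
          ← ofReal_mul (by positivity)]
        exact ofReal_le_ofReal (abs_sub_taylor_le hΘ hK' mbar m)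
    _ = ENNReal.ofReal c * ∫⁻ m, ‖m - mbar‖ₑ ^ (p + 1) ∂μ := lintegral_const_mul' _ _ ofReal_ne_top
    _ ≤ ENNReal.ofReal c * ENNReal.ofReal (B * ε ^ (((p + 1 : ℕ) : ℝ) / 2)) := by
        gcongr; exact hmoment ε hε μ hμ
    _ = ENNReal.ofReal (c * B * ε ^ (((p : ℝ) + 1) / 2)) := by
        rw [← ofReal_mul (by positivity)]; push_cast; ring_nf

/-- If `Θ : H → ℝ` is `(p+1)` times continuously Fréchet differentiable with
uniformly bounded `(p+1)`-st derivative, and `m ~ N(mbar, ε • C)` with `C` positive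
self-adjoint trace class, then the expected absolute truncation error of the `p`-th order
Taylor expansion of `Θ` about `mbar` is `O(ε^{(p+1)/2})` as `ε → 0`. -/
theorem expected_taylor_remainder_higher_order
    {H : Type*} [NormedAddCommGroup H] [InnerProductSpace ℝ H] [CompleteSpace H]
    [TopologicalSpace.SeparableSpace H] [MeasurableSpace H] [BorelSpace H]
    (p : ℕ) (hp : 1 ≤ p)
    (Θ : H → ℝ) (hΘ : ContDiff ℝ (↑(p + 1)) Θ)
    (K : ℝ)
    (hK : ∀ (ξ : H) (v : Fin (p + 1) → H),
      |iteratedFDeriv ℝ (p + 1) Θ ξ v| ≤ K * ∏ i, ‖v i‖)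
    (mbar : H) (C : H →L[ℝ] H)
    (hCsa : ∀ x y : H, ⟪C x, y⟫ = ⟪x, C y⟫)
    (hCpos : ∀ x : H, 0 ≤ ⟪C x, x⟫)
    {ι : Type*} (e : HilbertBasis ι ℝ H)
    (htr : Summable fun i => ⟪C (e i), e i⟫) :
    ∃ M : ℝ, ∀ ε : ℝ, 0 < ε → ∀ μ : Measure H, IsGaussianH μ mbar (ε • C) →
      ∫ m, |Θ m - (Θ mbar + ∑ n ∈ Finset.Icc 1 p,
          (1 / (n.factorial : ℝ)) * iteratedFDeriv ℝ n Θ mbar (fun _ => m - mbar))| ∂μ ≤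
        M * ε ^ (((p : ℝ) + 1) / 2) :=
  expected_taylor_remainder_higher_order_general p hp Θ hΘ K hK mbar C hCpos e htr
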